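/- arXiv:2504.02130 — 8 statements merged into one kernel-verified Lean document; each statement's English description precedes it below -/
import Mathlib

section
/- If r' ∈ ℝ^K preserves the order of r ∈ ℝ^K (i.e., for all i, j, r(i) > r(j) iff r'(i) > r'(j)), then for any probability distribution π on [K], the covariance r'^T (diag(π) - π π^T) r is nonnegative. -/
/-!
The covariance `r'ᵀ (diag π - π πᵀ) r` equals `½ ∑ᵢ ∑ⱼ πᵢ πⱼ (r'ᵢ - r'ⱼ)(rᵢ - rⱼ)`, a weighted form of
Chebyshev's sum inequality. Since `r'` and `r` are ordered alike, every summand is nonnegative.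
-/

open Finset Matrix

variable {ι R : Type*}

section CommRing

variable [CommRing R]

theorem sum_sum_mul_mul_sub_mul_sub (s : Finset ι) (w f g : ι → R) :
    ∑ i ∈ s, ∑ j ∈ s, w i * w j * ((f i - f j) * (g i - g j)) =
      2 * ((∑ i ∈ s, w i) * ∑ i ∈ s, w i * (f i * g i) -
        (∑ i ∈ s, w i * f i) * ∑ i ∈ s, w i * g i) := by
  have expand : ∀ i j, w i * w j * ((f i - f j) * (g i - g j)) =
      w i * (f i * g i) * w j + w i * (w j * (f j * g j)) -
        w i * f i * (w j * g j) - w i * g i * (w j * f j) := fun i j => by ring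
  simp only [expand, sum_sub_distrib, sum_add_distrib, ← sum_mul_sum]
  ring

theorem dotProduct_diagonal_sub_vecMulVec_mulVec [Fintype ι] [DecidableEq ι] (p x y : ι → R) :
    x ⬝ᵥ ((diagonal p - vecMulVec p p) *ᵥ y) =
      ∑ i, p i * (x i * y i) - (∑ i, p i * x i) * ∑ i, p i * y i := by
  simp only [sub_mulVec, dotProduct_sub, vecMulVec_mulVec]
  congr 1
  · exact sum_congr rfl fun i _ => by rw [mulVec_diagonal]; ring
  · simp only [dotProduct, Pi.smul_apply, op_smul_eq_mul, sum_mul]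
    exact sum_congr rfl fun i _ => by ring

end CommRing

theorem Monovary.sum_mul_sum_le_sum_mul_sum [CommRing R] [LinearOrder R] [IsStrictOrderedRing R]
    [Fintype ι] {w f g : ι → R} (hw : 0 ≤ w) (hfg : Monovary f g) :
    (∑ i, w i * f i) * ∑ i, w i * g i ≤ (∑ i, w i) * ∑ i, w i * (f i * g i) := by
  have h : 0 ≤ ∑ i, ∑ j, w i * w j * ((f i - f j) * (g i - g j)) :=
    sum_nonneg fun i _ => sum_nonneg fun j _ =>
      mul_nonneg (mul_nonneg (hw i) (hw j)) (hfg.sub_mul_sub_nonneg j i)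
  rw [sum_sum_mul_mul_sub_mul_sub] at h
  linarith

theorem nonneg_covariance_of_order_preserving {K : ℕ} (r r' π : Fin K → ℝ)
    (horder : ∀ i j, r i > r j ↔ r' i > r' j)
    (hπ0 : ∀ i, 0 ≤ π i) (hπ1 : ∑ i, π i = 1) :
    0 ≤ r' ⬝ᵥ ((Matrix.diagonal π - Matrix.vecMulVec π π) *ᵥ r) := by
  have hmono : Monovary r' r := fun i j hij => ((horder j i).mp hij).le
  rw [dotProduct_diagonal_sub_vecMulVec_mulVec, sub_nonneg]
  simpa only [hπ1, one_mul] using hmono.sum_mul_sum_le_sum_mul_sum hπ0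
end

section
/- Consider the NPG update θ_{t+1} = θ_t + η·(X^T X)^{-1} X^T r with log-linear policy π_θ = softmax(Xθ), X of full column rank, constant η > 0. If the projection r̂ = X(X^T X)^{-1} X^T r satisfies r̂(a*) > r̂(a) for all a ≠ a*, where a* = argmax_a r(a), then for any initialization θ_1, π_{θ_t}(a*) → 1 as t → ∞. -/
/-! The NPG step adds the constant vector η (XᵀX)⁻¹Xᵀr to θ, so after t steps the logits are
`Xθ₀ + t·η·r̂`. Since `r̂` is uniquely maximised at `a*`, every logit gap `(Xθ_t)(a) - (Xθ_t)(a*)`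
with `a ≠ a*` decreases linearly to `-∞`, and the softmax mass at `a*`, which is
`(∑ₐ exp((Xθ_t)(a) - (Xθ_t)(a*)))⁻¹`, tends to `1`. -/

open Matrix Filter

noncomputable def softmaxPolicy {K d : ℕ} (X : Matrix (Fin K) (Fin d) ℝ)
    (θ : Fin d → ℝ) (a : Fin K) : ℝ :=
  Real.exp ((X *ᵥ θ) a) / ∑ a', Real.exp ((X *ᵥ θ) a')

open Topology

theorem eq_add_nsmul_of_forall_succ_eq_add {M : Type*} [AddMonoid M] {x : ℕ → M} {v : M}
    (h : ∀ t, x (t + 1) = x t + v) (t : ℕ) : x t = x 0 + t • v := by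
  induction t with
  | zero => simp
  | succ t ih => rw [h, ih, succ_nsmul, add_assoc]

theorem tendsto_add_nsmul_sub_atBot {ι : Type*} (z₀ v : ι → ℝ) {a b : ι} (hv : v b < v a) :
    Tendsto (fun t : ℕ => (z₀ + t • v) b - (z₀ + t • v) a) atTop atBot := by
  have hlin : ∀ t : ℕ, (z₀ + t • v) b - (z₀ + t • v) a = (z₀ b - z₀ a) + t * (v b - v a) :=
    fun t => by simp only [Pi.add_apply, nsmul_eq_mul, Pi.mul_apply, Pi.natCast_apply]; ring
  simp only [hlin]
  exact tendsto_atBot_add_const_left _ _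
    (tendsto_natCast_atTop_atTop.atTop_mul_const_of_neg (sub_neg.mpr hv))

section Softmax

variable {ι : Type*} [Fintype ι]

theorem exp_div_sum_exp_eq_inv_sum_exp_sub (z : ι → ℝ) (a : ι) :
    Real.exp (z a) / ∑ b, Real.exp (z b) = (∑ b, Real.exp (z b - z a))⁻¹ := by
  have hsum : ∑ b, Real.exp (z b) = Real.exp (z a) * ∑ b, Real.exp (z b - z a) := by
    rw [Finset.mul_sum]
    exact Finset.sum_congr rfl fun b _ => by rw [← Real.exp_add, add_sub_cancel]
  rw [hsum, div_mul_cancel_left₀ (Real.exp_ne_zero _)]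

theorem tendsto_exp_div_sum_exp_nhds_one {α : Type*} {l : Filter α} (z : α → ι → ℝ) (a : ι)
    (hgap : ∀ b ≠ a, Tendsto (fun t => z t b - z t a) l atBot) :
    Tendsto (fun t => Real.exp (z t a) / ∑ b, Real.exp (z t b)) l (𝓝 1) := by
  classical
  have hsum : Tendsto (fun t => ∑ b, Real.exp (z t b - z t a)) l
      (𝓝 (∑ b, if b = a then 1 else 0)) := by
    refine tendsto_finsetSum _ fun b _ => ?_
    by_cases hb : b = a
    · simp only [hb, sub_self, Real.exp_zero, if_true]
      exact tendsto_const_nhds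
    · simp only [hb, if_false]
      exact Real.tendsto_exp_atBot.comp (hgap b hb)
  simp only [Finset.sum_ite_eq', Finset.mem_univ, if_true] at hsum
  simpa only [exp_div_sum_exp_eq_inv_sum_exp_sub, inv_one] using hsum.inv₀ one_ne_zero

theorem tendsto_exp_div_sum_exp_add_nsmul (z₀ v : ι → ℝ) (a : ι) (hv : ∀ b ≠ a, v b < v a) :
    Tendsto (fun t : ℕ => Real.exp ((z₀ + t • v) a) / ∑ b, Real.exp ((z₀ + t • v) b))
      atTop (𝓝 1) :=
  tendsto_exp_div_sum_exp_nhds_one (fun t : ℕ => z₀ + t • v) a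
    fun b hb => tendsto_add_nsmul_sub_atBot z₀ v (hv b hb)

end Softmax

theorem npg_global_convergence_general {K d : ℕ} (X : Matrix (Fin K) (Fin d) ℝ)
    (r : Fin K → ℝ) (astar : Fin K)
    (η : ℝ) (hη : 0 < η)
    (θ : ℕ → Fin d → ℝ)
    (hupdate : ∀ t, θ (t + 1) = θ t + η • ((Xᵀ * X)⁻¹ *ᵥ (Xᵀ *ᵥ r)))
    (hproj : ∀ a, a ≠ astar →
      (X *ᵥ ((Xᵀ * X)⁻¹ *ᵥ (Xᵀ *ᵥ r))) a < (X *ᵥ ((Xᵀ * X)⁻¹ *ᵥ (Xᵀ *ᵥ r))) astar) :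
    Tendsto (fun t => softmaxPolicy X (θ t) astar) atTop (nhds 1) := by
  set g := (Xᵀ * X)⁻¹ *ᵥ (Xᵀ *ᵥ r)
  have hlogits : ∀ t : ℕ, X *ᵥ θ t = X *ᵥ θ 0 + t • (η • X *ᵥ g) := fun t => by
    rw [eq_add_nsmul_of_forall_succ_eq_add hupdate t, mulVec_add, mulVec_smul, mulVec_smul]
  have hv : ∀ a ≠ astar, (η • X *ᵥ g) a < (η • X *ᵥ g) astar := fun a ha => by
    simpa only [Pi.smul_apply, smul_eq_mul] using mul_lt_mul_of_pos_left (hproj a ha) hη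
  refine (tendsto_exp_div_sum_exp_add_nsmul (X *ᵥ θ 0) _ astar hv).congr fun t => ?_
  rw [softmaxPolicy, hlogits t]

theorem npg_global_convergence {K d : ℕ} (X : Matrix (Fin K) (Fin d) ℝ)
    (r : Fin K → ℝ) (astar : Fin K)
    (hmax : ∀ a, a ≠ astar → r a < r astar)
    (hrank : IsUnit (Xᵀ * X).det)
    (η : ℝ) (hη : 0 < η)
    (θ : ℕ → Fin d → ℝ)
    (hupdate : ∀ t, θ (t + 1) = θ t + η • ((Xᵀ * X)⁻¹ *ᵥ (Xᵀ *ᵥ r)))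
    (hproj : ∀ a, a ≠ astar →
      (X *ᵥ ((Xᵀ * X)⁻¹ *ᵥ (Xᵀ *ᵥ r))) a < (X *ᵥ ((Xᵀ * X)⁻¹ *ᵥ (Xᵀ *ᵥ r))) astar) :
    Tendsto (fun t => softmaxPolicy X (θ t) astar) atTop (nhds 1) :=
  npg_global_convergence_general X r astar η hη θ hupdate hproj
end

section
/- If there exists a sub-optimal action a ≠ a* with r̂(a*) ≤ r̂(a) where r̂ = X(X^T X)^{-1}X^T r, then the NPG iterates satisfy (π* - π_{θ_t})^T r ≥ Δ·π_{θ_1}(a)/(π_{θ_1}(a) + π_{θ_1}(a*)) > 0 for all t, where Δ = r(a*) - max_{a'≠a*} r(a'); hence NPG does not achieve global convergence. -/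
open Matrix

/-!
NPG moves the logits `Xθ` by the fixed vector `η r̂` at every step, so the logit of `a` never
falls behind that of `a*` by more than it did at `θ₁`. Hence the two-action ratio
`π(a) / (π(a) + π(a*))` never drops below its value at `θ₁`, and this ratio is at most
`1 - π(a*)`, while the suboptimality `(π* - π)ᵀ r` is at least `Δ (1 - π(a*))`.
-/

theorem add_nsmul_of_forall_succ_eq_add {M : Type*} [AddMonoid M] {θ : ℕ → M} {v : M}
    (h : ∀ t, θ (t + 1) = θ t + v) (t k : ℕ) : θ (t + k) = θ t + k • v := by
  induction k with
  | zero => simp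
  | succ k ih => rw [← add_assoc, h, ih, add_assoc, succ_nsmul]

theorem sub_sup'_erase_pos {ι : Type*} [DecidableEq ι] {s : Finset ι} {r : ι → ℝ} {i : ι}
    (hne : (s.erase i).Nonempty) (hmax : ∀ j, j ≠ i → r j < r i) :
    0 < r i - (s.erase i).sup' hne r :=
  sub_pos.2 <| (Finset.sup'_lt_iff hne).2 fun j hj => hmax j (Finset.ne_of_mem_erase hj)

theorem sub_sup'_erase_le_sub {ι : Type*} [DecidableEq ι] {s : Finset ι} {r : ι → ℝ} {i j : ι}
    (hne : (s.erase i).Nonempty) (hj : j ∈ s) (hji : j ≠ i) :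
    r i - (s.erase i).sup' hne r ≤ r i - r j :=
  sub_le_sub_left (Finset.le_sup' r (Finset.mem_erase.2 ⟨hji, hj⟩)) _

theorem mul_one_sub_le_single_sub_dotProduct {ι : Type*} [Fintype ι] [DecidableEq ι]
    {p r : ι → ℝ} {i : ι} {Δ : ℝ} (hp : ∀ j, 0 ≤ p j) (hsum : ∑ j, p j = 1)
    (hgap : ∀ j, j ≠ i → Δ ≤ r i - r j) :
    Δ * (1 - p i) ≤ (Pi.single i 1 - p) ⬝ᵥ r := by
  have hregret : (Pi.single i 1 - p) ⬝ᵥ r = ∑ j ∈ Finset.univ.erase i, p j * (r i - r j) := by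
    rw [Finset.sum_erase _ (by simp), sub_dotProduct, single_dotProduct, one_mul, dotProduct]
    simp only [mul_sub, Finset.sum_sub_distrib, ← Finset.sum_mul, hsum, one_mul]
  have hoff : ∑ j ∈ Finset.univ.erase i, p j = 1 - p i := by
    rw [Finset.sum_erase_eq_sub (Finset.mem_univ i), hsum]
  rw [hregret, ← hoff, mul_comm, Finset.sum_mul]
  exact Finset.sum_le_sum fun j hj =>
    mul_le_mul_of_nonneg_left (hgap j (Finset.ne_of_mem_erase hj)) (hp j)

theorem div_add_le_one_sub {x y : ℝ} (hx : 0 ≤ x) (hy : 0 ≤ y) (hxy : x + y ≤ 1) :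
    x / (x + y) ≤ 1 - y := by
  rcases (add_nonneg hx hy).eq_or_lt with h | h
  · rw [← h, div_zero]; linarith
  · rw [div_le_iff₀ h]; nlinarith

section softmaxPolicy

variable {K d : ℕ} (X : Matrix (Fin K) (Fin d) ℝ) (θ : Fin d → ℝ)

theorem softmaxPolicy_pos (a : Fin K) : 0 < softmaxPolicy X θ a :=
  div_pos (Real.exp_pos _) (Finset.sum_pos (fun _ _ => Real.exp_pos _) ⟨a, Finset.mem_univ a⟩)

theorem sum_softmaxPolicy [NeZero K] : ∑ a, softmaxPolicy X θ a = 1 := by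
  unfold softmaxPolicy
  rw [← Finset.sum_div, div_self]
  exact (Finset.sum_pos (fun _ _ => Real.exp_pos _) Finset.univ_nonempty).ne'

theorem softmaxPolicy_add_le_one {a b : Fin K} (hab : a ≠ b) :
    softmaxPolicy X θ a + softmaxPolicy X θ b ≤ 1 := by
  have : NeZero K := NeZero.of_pos a.pos
  rw [← Finset.sum_pair hab, ← sum_softmaxPolicy X θ]
  exact Finset.sum_le_sum_of_subset_of_nonneg (Finset.subset_univ _)
    fun j _ _ => (softmaxPolicy_pos X θ j).le

/-- The softmax normaliser cancels in a two-action ratio, which is a logistic function of the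
logit difference. -/
theorem softmaxPolicy_div_add_eq (a b : Fin K) :
    softmaxPolicy X θ a / (softmaxPolicy X θ a + softmaxPolicy X θ b) =
      (1 + Real.exp ((X *ᵥ θ) b - (X *ᵥ θ) a))⁻¹ := by
  have hS : (0 : ℝ) < ∑ a', Real.exp ((X *ᵥ θ) a') :=
    Finset.sum_pos (fun _ _ => Real.exp_pos _) ⟨a, Finset.mem_univ a⟩
  have ha := Real.exp_pos ((X *ᵥ θ) a)
  have hb := Real.exp_pos ((X *ᵥ θ) b)
  rw [softmaxPolicy, softmaxPolicy, Real.exp_sub]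
  field_simp

theorem softmaxPolicy_div_add_le_of_sub_le {θ' : Fin d → ℝ} {a b : Fin K}
    (h : (X *ᵥ θ) b - (X *ᵥ θ) a ≤ (X *ᵥ θ') b - (X *ᵥ θ') a) :
    softmaxPolicy X θ' a / (softmaxPolicy X θ' a + softmaxPolicy X θ' b) ≤
      softmaxPolicy X θ a / (softmaxPolicy X θ a + softmaxPolicy X θ b) := by
  rw [softmaxPolicy_div_add_eq, softmaxPolicy_div_add_eq]
  gcongr

end softmaxPolicy

theorem npg_failure_without_optimal_action_preservation_general {K d : ℕ}
    (X : Matrix (Fin K) (Fin d) ℝ) (r : Fin K → ℝ) (astar : Fin K)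
    (hmax : ∀ a, a ≠ astar → r a < r astar)
    (η : ℝ) (hη : 0 < η)
    (θ : ℕ → Fin d → ℝ)
    (hupdate : ∀ t, θ (t + 1) = θ t + η • ((Xᵀ * X)⁻¹ *ᵥ (Xᵀ *ᵥ r)))
    (a : Fin K) (ha : a ≠ astar)
    (hbad : (X *ᵥ ((Xᵀ * X)⁻¹ *ᵥ (Xᵀ *ᵥ r))) astar ≤ (X *ᵥ ((Xᵀ * X)⁻¹ *ᵥ (Xᵀ *ᵥ r))) a)
    (hne : (Finset.univ.erase astar).Nonempty) :
    ∀ t, 1 ≤ t →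
      (0 < (r astar - (Finset.univ.erase astar).sup' hne r) * softmaxPolicy X (θ 1) a /
          (softmaxPolicy X (θ 1) a + softmaxPolicy X (θ 1) astar)) ∧
      (r astar - (Finset.univ.erase astar).sup' hne r) * softmaxPolicy X (θ 1) a /
          (softmaxPolicy X (θ 1) a + softmaxPolicy X (θ 1) astar) ≤
        (Pi.single astar 1 - softmaxPolicy X (θ t)) ⬝ᵥ r := by
  intro t ht
  obtain ⟨k, rfl⟩ : ∃ k, t = 1 + k := ⟨t - 1, by omega⟩
  have : NeZero K := NeZero.of_pos a.pos
  set Δ := r astar - (Finset.univ.erase astar).sup' hne r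
  have hΔ : 0 < Δ := sub_sup'_erase_pos hne hmax
  have hq := softmaxPolicy_pos X (θ 1)
  refine ⟨div_pos (mul_pos hΔ (hq a)) (add_pos (hq a) (hq astar)), ?_⟩
  have hlogits : (X *ᵥ θ (1 + k)) astar - (X *ᵥ θ (1 + k)) a ≤
      (X *ᵥ θ 1) astar - (X *ᵥ θ 1) a := by
    rw [add_nsmul_of_forall_succ_eq_add hupdate, mulVec_add, mulVec_smul, mulVec_smul]
    simp only [Pi.add_apply, Pi.smul_apply, smul_eq_mul]
    rw [nsmul_eq_mul, nsmul_eq_mul]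
    nlinarith [mul_le_mul_of_nonneg_left hbad hη.le, k.cast_nonneg (α := ℝ)]
  have hp := softmaxPolicy_pos X (θ (1 + k))
  calc Δ * softmaxPolicy X (θ 1) a / (softmaxPolicy X (θ 1) a + softmaxPolicy X (θ 1) astar)
      = Δ * (softmaxPolicy X (θ 1) a /
          (softmaxPolicy X (θ 1) a + softmaxPolicy X (θ 1) astar)) := mul_div_assoc ..
    _ ≤ Δ * (softmaxPolicy X (θ (1 + k)) a /
          (softmaxPolicy X (θ (1 + k)) a + softmaxPolicy X (θ (1 + k)) astar)) :=
        mul_le_mul_of_nonneg_left (softmaxPolicy_div_add_le_of_sub_le X _ hlogits) hΔ.le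
    _ ≤ Δ * (1 - softmaxPolicy X (θ (1 + k)) astar) :=
        mul_le_mul_of_nonneg_left (div_add_le_one_sub (hp a).le (hp astar).le
          (softmaxPolicy_add_le_one X _ ha)) hΔ.le
    _ ≤ (Pi.single astar 1 - softmaxPolicy X (θ (1 + k))) ⬝ᵥ r :=
        mul_one_sub_le_single_sub_dotProduct (fun j => (hp j).le) (sum_softmaxPolicy X _)
          fun j hj => sub_sup'_erase_le_sub hne (Finset.mem_univ j) hj

theorem npg_failure_without_optimal_action_preservation {K d : ℕ}
    (X : Matrix (Fin K) (Fin d) ℝ) (r : Fin K → ℝ) (astar : Fin K)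
    (hmax : ∀ a, a ≠ astar → r a < r astar)
    (hrank : IsUnit (Xᵀ * X).det)
    (η : ℝ) (hη : 0 < η)
    (θ : ℕ → Fin d → ℝ)
    (hupdate : ∀ t, θ (t + 1) = θ t + η • ((Xᵀ * X)⁻¹ *ᵥ (Xᵀ *ᵥ r)))
    (a : Fin K) (ha : a ≠ astar)
    (hbad : (X *ᵥ ((Xᵀ * X)⁻¹ *ᵥ (Xᵀ *ᵥ r))) astar ≤ (X *ᵥ ((Xᵀ * X)⁻¹ *ᵥ (Xᵀ *ᵥ r))) a)
    (hne : (Finset.univ.erase astar).Nonempty) :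
    ∀ t, 1 ≤ t →
      (0 < (r astar - (Finset.univ.erase astar).sup' hne r) * softmaxPolicy X (θ 1) a /
          (softmaxPolicy X (θ 1) a + softmaxPolicy X (θ 1) astar)) ∧
      (r astar - (Finset.univ.erase astar).sup' hne r) * softmaxPolicy X (θ 1) a /
          (softmaxPolicy X (θ 1) a + softmaxPolicy X (θ 1) astar) ≤
        (Pi.single astar 1 - softmaxPolicy X (θ t)) ⬝ᵥ r :=
  npg_failure_without_optimal_action_preservation_general X r astar hmax η hη θ hupdate a ha hbad
    hne
end

section
/- Under the optimal action preservation condition r̂(a*) > r̂(a) for all a ≠ a*, NPG achieves a linear convergence rate: (π* - π_{θ_t})^T r ≤ 2‖r‖_∞ · c·K / (c·K + exp(η·Δ̂·(t-1))), where Δ̂ = r̂(a*) - max_{a≠a*} r̂(a) and c = max_{a≠a*} π_{θ_1}(a)/π_{θ_1}(a*). -/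
open Matrix

theorem npg_linear_convergence_rate {K d : ℕ}
    (X : Matrix (Fin K) (Fin d) ℝ) (r : Fin K → ℝ) (astar : Fin K)
    (hmax : ∀ a, a ≠ astar → r a < r astar)
    (hrank : IsUnit (Xᵀ * X).det)
    (η : ℝ) (hη : 0 < η)
    (θ : ℕ → Fin d → ℝ)
    (hupdate : ∀ t, θ (t + 1) = θ t + η • ((Xᵀ * X)⁻¹ *ᵥ (Xᵀ *ᵥ r)))
    (hproj : ∀ a, a ≠ astar →
      (X *ᵥ ((Xᵀ * X)⁻¹ *ᵥ (Xᵀ *ᵥ r))) a < (X *ᵥ ((Xᵀ * X)⁻¹ *ᵥ (Xᵀ *ᵥ r))) astar)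
    (hne : (Finset.univ.erase astar).Nonempty) :
    ∀ t : ℕ, 1 ≤ t →
      (Pi.single astar 1 - softmaxPolicy X (θ t)) ⬝ᵥ r ≤
        2 * (⨆ a, |r a|) *
          ((Finset.univ.erase astar).sup' hne
              (fun a => softmaxPolicy X (θ 1) a / softmaxPolicy X (θ 1) astar) * K) /
          ((Finset.univ.erase astar).sup' hne
              (fun a => softmaxPolicy X (θ 1) a / softmaxPolicy X (θ 1) astar) * K +
            Real.exp (η * ((X *ᵥ ((Xᵀ * X)⁻¹ *ᵥ (Xᵀ *ᵥ r))) astar -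
              (Finset.univ.erase astar).sup' hne
                (fun a => (X *ᵥ ((Xᵀ * X)⁻¹ *ᵥ (Xᵀ *ᵥ r))) a)) * ((t : ℝ) - 1))) := by
  intro t ht
  set v : Fin d → ℝ := (Xᵀ * X)⁻¹ *ᵥ (Xᵀ *ᵥ r) with hv
  set rh : Fin K → ℝ := X *ᵥ v with hrhdef
  set c : ℝ := (Finset.univ.erase astar).sup' hne
      (fun a => softmaxPolicy X (θ 1) a / softmaxPolicy X (θ 1) astar) with hcdef
  set Δ : ℝ := rh astar - (Finset.univ.erase astar).sup' hne (fun a => rh a) with hΔdef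
  set S : ℝ := η * Δ * ((t : ℝ) - 1) with hSdef
  -- basic positivity
  have hKne : Nonempty (Fin K) := ⟨astar⟩
  have hZpos : ∀ s : ℕ, 0 < ∑ a', Real.exp ((X *ᵥ θ s) a') := fun s =>
    Finset.sum_pos (fun a _ => Real.exp_pos _) Finset.univ_nonempty
  have hπpos : ∀ (s : ℕ) (a : Fin K), 0 < softmaxPolicy X (θ s) a := fun s a =>
    div_pos (Real.exp_pos _) (hZpos s)
  have hπsum : ∀ s : ℕ, ∑ a, softmaxPolicy X (θ s) a = 1 := by
    intro s
    unfold softmaxPolicy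
    rw [← Finset.sum_div, div_self (ne_of_gt (hZpos s))]
  have hcpos : 0 < c := by
    obtain ⟨a, ha⟩ := hne
    calc (0:ℝ) < softmaxPolicy X (θ 1) a / softmaxPolicy X (θ 1) astar :=
          div_pos (hπpos 1 a) (hπpos 1 astar)
      _ ≤ c := by
          rw [hcdef]
          exact Finset.le_sup'
            (fun a => softmaxPolicy X (θ 1) a / softmaxPolicy X (θ 1) astar) ha
  have hKpos : (0:ℝ) < K := by
    have : 0 < K := Fin.pos astar
    exact_mod_cast this
  -- trajectory
  have htraj : ∀ s : ℕ, 1 ≤ s →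
      X *ᵥ θ s = fun a => (X *ᵥ θ 1) a + η * ((s : ℝ) - 1) * rh a := by
    intro s hs
    induction s, hs using Nat.le_induction with
    | base => funext a; simp
    | succ n hn ih =>
        rw [hupdate n, mulVec_add, mulVec_smul]
        funext a
        simp only [Pi.add_apply, Pi.smul_apply, smul_eq_mul, ih, ← hv, ← hrhdef]
        push_cast
        ring
  -- ratio bound for a ≠ astar
  have hratio : ∀ a ∈ Finset.univ.erase astar,
      softmaxPolicy X (θ t) a ≤ softmaxPolicy X (θ t) astar * (c * Real.exp (-S)) := by
    intro a ha
    have hane : a ≠ astar := Finset.ne_of_mem_erase ha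
    have hform : ∀ s : ℕ, softmaxPolicy X (θ s) a =
        softmaxPolicy X (θ s) astar * Real.exp ((X *ᵥ θ s) a - (X *ᵥ θ s) astar) := by
      intro s
      unfold softmaxPolicy
      rw [Real.exp_sub]
      field_simp
    have hexp1 : Real.exp ((X *ᵥ θ 1) a - (X *ᵥ θ 1) astar) ≤ c := by
      have h2 : softmaxPolicy X (θ 1) a / softmaxPolicy X (θ 1) astar =
          Real.exp ((X *ᵥ θ 1) a - (X *ᵥ θ 1) astar) := by
        rw [hform 1, mul_comm, mul_div_assoc, div_self (ne_of_gt (hπpos 1 astar)), mul_one]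
      rw [← h2, hcdef]
      exact Finset.le_sup' (fun a => softmaxPolicy X (θ 1) a / softmaxPolicy X (θ 1) astar) ha
    have hrhle : rh a ≤ (Finset.univ.erase astar).sup' hne (fun a => rh a) :=
      Finset.le_sup' _ ha
    have hdiff : (X *ᵥ θ t) a - (X *ᵥ θ t) astar =
        ((X *ᵥ θ 1) a - (X *ᵥ θ 1) astar) + η * ((t:ℝ) - 1) * (rh a - rh astar) := by
      rw [htraj t ht]; ring
    have ht1 : (0:ℝ) ≤ (t:ℝ) - 1 := by
      have : (1:ℝ) ≤ (t:ℝ) := by exact_mod_cast ht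
      linarith
    have hexp2 : Real.exp (η * ((t:ℝ) - 1) * (rh a - rh astar)) ≤ Real.exp (-S) := by
      apply Real.exp_le_exp.2
      have h1 : rh a - rh astar ≤ -Δ := by rw [hΔdef]; linarith
      have h2 : η * ((t:ℝ) - 1) * (rh a - rh astar) ≤ η * ((t:ℝ) - 1) * (-Δ) := by
        apply mul_le_mul_of_nonneg_left h1 (by positivity)
      rw [hSdef]; linarith
    calc softmaxPolicy X (θ t) a
        = softmaxPolicy X (θ t) astar *
            (Real.exp ((X *ᵥ θ 1) a - (X *ᵥ θ 1) astar) *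
             Real.exp (η * ((t:ℝ) - 1) * (rh a - rh astar))) := by
          rw [hform t, hdiff, Real.exp_add]
      _ ≤ softmaxPolicy X (θ t) astar * (c * Real.exp (-S)) := by
          apply mul_le_mul_of_nonneg_left _ (le_of_lt (hπpos t astar))
          exact mul_le_mul hexp1 hexp2 (le_of_lt (Real.exp_pos _)) (le_of_lt hcpos)
  -- bound on the off-optimal mass
  have hcard : ((Finset.univ.erase astar).card : ℝ) ≤ (K:ℝ) := by
    have h1 : (Finset.univ.erase astar).card ≤ (Finset.univ : Finset (Fin K)).card :=
      Finset.card_le_card (Finset.erase_subset _ _)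
    have h2 : (Finset.univ : Finset (Fin K)).card = K := by simp
    exact_mod_cast h1.trans_eq h2
  set s1 : ℝ := ∑ a ∈ Finset.univ.erase astar, softmaxPolicy X (θ t) a with hs1def
  have hs1 : s1 = 1 - softmaxPolicy X (θ t) astar := by
    rw [hs1def, Finset.sum_erase_eq_sub (Finset.mem_univ astar), hπsum t]
  have hmass : s1 ≤ c * K * Real.exp (-S) * (1 - s1) := by
    have h1 : s1 ≤ ((Finset.univ.erase astar).card : ℝ) *
        (softmaxPolicy X (θ t) astar * (c * Real.exp (-S))) := by
      rw [hs1def]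
      calc ∑ a ∈ Finset.univ.erase astar, softmaxPolicy X (θ t) a
          ≤ ∑ _a ∈ Finset.univ.erase astar,
              softmaxPolicy X (θ t) astar * (c * Real.exp (-S)) :=
            Finset.sum_le_sum hratio
        _ = _ := by rw [Finset.sum_const, nsmul_eq_mul]
    have h2 : ((Finset.univ.erase astar).card : ℝ) *
        (softmaxPolicy X (θ t) astar * (c * Real.exp (-S))) ≤
        (K:ℝ) * (softmaxPolicy X (θ t) astar * (c * Real.exp (-S))) := by
      exact mul_le_mul_of_nonneg_right hcard
        (mul_nonneg (hπpos t astar).le (by positivity))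
    have h3 : softmaxPolicy X (θ t) astar = 1 - s1 := by linarith [hs1]
    calc s1 ≤ (K:ℝ) * (softmaxPolicy X (θ t) astar * (c * Real.exp (-S))) := h1.trans h2
      _ = c * K * Real.exp (-S) * (1 - s1) := by rw [h3]; ring
  have hmass2 : s1 ≤ c * K / (c * K + Real.exp S) := by
    have hE : Real.exp (-S) * Real.exp S = 1 := by
      rw [← Real.exp_add]; simp
    have hden : 0 < c * K + Real.exp S := by positivity
    rw [le_div_iff₀ hden]
    have hmul : s1 * Real.exp S ≤ c * K * Real.exp (-S) * (1 - s1) * Real.exp S :=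
      mul_le_mul_of_nonneg_right hmass (Real.exp_pos S).le
    have key : c * K * Real.exp (-S) * (1 - s1) * Real.exp S = c * K * (1 - s1) := by
      rw [show c * K * Real.exp (-S) * (1 - s1) * Real.exp S
          = c * K * (1 - s1) * (Real.exp (-S) * Real.exp S) by ring, hE, mul_one]
    nlinarith [hmul, key]
  -- sup-norm bound
  have hM : ∀ a, |r a| ≤ ⨆ a, |r a| := fun a =>
    le_ciSup (f := fun a => |r a|) (Set.Finite.bddAbove (Set.finite_range _)) a
  set M : ℝ := ⨆ a, |r a| with hMdef
  have hMnn : 0 ≤ M := (abs_nonneg _).trans (hM astar)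
  -- rewrite the dot product
  have e1 : (Pi.single astar 1 - softmaxPolicy X (θ t)) ⬝ᵥ r
      = r astar - ∑ a, softmaxPolicy X (θ t) a * r a := by
    simp only [dotProduct, Pi.sub_apply, sub_mul, Finset.sum_sub_distrib]
    congr 1
    rw [Finset.sum_eq_single astar (fun b _ hb => by simp [Pi.single_eq_of_ne hb])
      (by simp)]
    simp
  have e2 : ∑ a ∈ Finset.univ.erase astar, softmaxPolicy X (θ t) a * (r astar - r a)
      = r astar - ∑ a, softmaxPolicy X (θ t) a * r a := by
    rw [Finset.sum_erase_eq_sub (Finset.mem_univ astar)]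
    simp only [mul_sub]
    rw [Finset.sum_sub_distrib, ← Finset.sum_mul, hπsum t]
    ring
  calc (Pi.single astar 1 - softmaxPolicy X (θ t)) ⬝ᵥ r
      = ∑ a ∈ Finset.univ.erase astar, softmaxPolicy X (θ t) a * (r astar - r a) := by
        rw [e1, ← e2]
    _ ≤ ∑ a ∈ Finset.univ.erase astar, softmaxPolicy X (θ t) a * (2 * M) := by
        apply Finset.sum_le_sum
        intro a ha
        apply mul_le_mul_of_nonneg_left _ (hπpos t a).le
        have h1 : r astar ≤ M := (le_abs_self _).trans (hM astar)
        have h2 : -M ≤ r a := by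
          have := (hM a)
          have := neg_abs_le (r a)
          linarith
        linarith
    _ = 2 * M * s1 := by rw [← Finset.sum_mul, hs1def]; ring
    _ ≤ 2 * M * (c * K / (c * K + Real.exp S)) :=
        mul_le_mul_of_nonneg_left hmass2 (by linarith)
    _ = 2 * M * (c * K) / (c * K + Real.exp S) := by ring
end

section
/- For the 4×2 feature matrix X with rows (0,-2), (0,1), (-1,0), (2,0) and reward r = (9,8,7,6), no vector w ∈ ℝ^2 exists such that Xw preserves the order of r (i.e., such that (Xw)(1) > (Xw)(2) > (Xw)(3) > (Xw)(4)). -/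
/-!
Order preservation forces `Xw = (-2 w₁, w₁, -w₀, 2 w₀)` to be strictly decreasing. The first
comparison gives `w₁ < 0`, the last gives `w₀ < 0`, and then the middle one, `w₁ > -w₀ > 0`,
is impossible.
-/

open Matrix

theorem StrictAnti.of_gt_iff_gt {ι α β : Type*} [Preorder ι] [Preorder α] [Preorder β]
    {r : ι → α} {f : ι → β} (hr : StrictAnti r) (h : ∀ i j, r i > r j ↔ f i > f j) :
    StrictAnti f :=
  fun _ _ hij => (h _ _).mp (hr hij)

theorem mulVec_example_two (w : Fin 2 → ℝ) :
    (!![0, -2; 0, 1; -1, 0; 2, 0] : Matrix (Fin 4) (Fin 2) ℝ) *ᵥ w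
      = ![-2 * w 1, w 1, -w 0, 2 * w 0] := by
  ext i
  fin_cases i <;> simp [mulVec, dotProduct, Fin.sum_univ_succ]

theorem example_two_no_order_preserving_direction :
    let X : Matrix (Fin 4) (Fin 2) ℝ := !![0, -2; 0, 1; -1, 0; 2, 0]
    let r : Fin 4 → ℝ := ![9, 8, 7, 6]
    ¬ ∃ w : Fin 2 → ℝ, ∀ i j : Fin 4, r i > r j ↔ (X *ᵥ w) i > (X *ᵥ w) j := by
  intro X r
  rintro ⟨w, hw⟩
  have hr : StrictAnti r := by
    rw [Fin.strictAnti_iff_succ_lt]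
    intro i
    fin_cases i <;> simp [r, Matrix.cons_val] <;> norm_num
  have hXw : StrictAnti ![-2 * w 1, w 1, -w 0, 2 * w 0] := by
    rw [← mulVec_example_two]
    exact hr.of_gt_iff_gt hw
  have h01 := hXw (show (0 : Fin 4) < 1 by decide)
  have h12 := hXw (show (1 : Fin 4) < 2 by decide)
  have h23 := hXw (show (2 : Fin 4) < 3 by decide)
  simp only [Matrix.cons_val] at h01 h12 h23
  linarith
end

section
/- Along the Softmax PG update θ_{t+1} = θ_t + η X^T(diag(π_{θ_t}) - π_{θ_t}π_{θ_t}^T) r, if w ∈ ℝ^d is such that Xw preserves the order of r, then the inner product w^T θ_t is non-decreasing in t. -/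
open Matrix

lemma cov_nonneg_aux {K : ℕ} (p f r : Fin K → ℝ) (hsum : ∑ i, p i = 1) :
    ∑ i, ∑ j, p i * p j * ((f i - f j) * (r i - r j))
      = 2 * (∑ i, p i * (f i * r i)) - 2 * ((∑ i, p i * f i) * (∑ i, p i * r i)) := by
  have h : ∀ i : Fin K, ∑ j, p i * p j * ((f i - f j) * (r i - r j))
      = (p i * (f i * r i)) * (∑ j, p j) - (p i * f i) * (∑ j, p j * r j)
        - (p i * r i) * (∑ j, p j * f j) + p i * (∑ j, p j * (f j * r j)) := by
    intro i
    rw [Finset.mul_sum, Finset.mul_sum, Finset.mul_sum, Finset.mul_sum,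
      ← Finset.sum_sub_distrib, ← Finset.sum_sub_distrib, ← Finset.sum_add_distrib]
    exact Finset.sum_congr rfl fun j _ => by ring
  simp_rw [h, hsum]
  rw [Finset.sum_add_distrib, Finset.sum_sub_distrib, Finset.sum_sub_distrib,
    ← Finset.sum_mul, ← Finset.sum_mul, ← Finset.sum_mul, ← Finset.sum_mul]
  rw [hsum]; ring

lemma cov_nonneg {K : ℕ} (p f r : Fin K → ℝ) (hp : ∀ i, 0 ≤ p i)
    (hsum : ∑ i, p i = 1)
    (hmono : ∀ i j, 0 ≤ (f i - f j) * (r i - r j)) :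
    (∑ i, p i * f i) * (∑ i, p i * r i) ≤ ∑ i, p i * (f i * r i) := by
  have key : 0 ≤ ∑ i, ∑ j, p i * p j * ((f i - f j) * (r i - r j)) := by
    apply Finset.sum_nonneg; intro i _
    apply Finset.sum_nonneg; intro j _
    exact mul_nonneg (mul_nonneg (hp i) (hp j)) (hmono i j)
  rw [cov_nonneg_aux p f r hsum] at key
  linarith

theorem pg_inner_product_monotone {K d : ℕ} (X : Matrix (Fin K) (Fin d) ℝ)
    (r : Fin K → ℝ) (η : ℝ) (hη : 0 < η) (w : Fin d → ℝ)
    (horder : ∀ i j, r i > r j ↔ (X *ᵥ w) i > (X *ᵥ w) j)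
    (θ : ℕ → Fin d → ℝ)
    (hupdate : ∀ t, θ (t + 1) = θ t + η •
      (Xᵀ *ᵥ ((Matrix.diagonal (softmaxPolicy X (θ t)) -
        Matrix.vecMulVec (softmaxPolicy X (θ t)) (softmaxPolicy X (θ t))) *ᵥ r))) :
    ∀ t, w ⬝ᵥ θ t ≤ w ⬝ᵥ θ (t + 1) := by
  intro t
  rw [hupdate t, dotProduct_add, dotProduct_smul, smul_eq_mul]
  set p : Fin K → ℝ := softmaxPolicy X (θ t) with hp_def
  set f : Fin K → ℝ := X *ᵥ w with hf_def
  have hmono : ∀ i j, 0 ≤ (f i - f j) * (r i - r j) := by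
    intro i j
    rcases lt_trichotomy (r i) (r j) with h | h | h
    · have hf : f i < f j := (horder j i).mp h
      nlinarith
    · simp [h]
    · have hf : f j < f i := (horder i j).mp h
      nlinarith
  have hp_nonneg : ∀ i, 0 ≤ p i := by
    intro i
    apply div_nonneg (Real.exp_nonneg _)
    exact Finset.sum_nonneg fun _ _ => Real.exp_nonneg _
  have hu : ∀ i, ((Matrix.diagonal p - Matrix.vecMulVec p p) *ᵥ r) i
      = p i * r i - p i * ∑ j, p j * r j := by
    intro i
    rw [sub_mulVec, Pi.sub_apply, mulVec_diagonal]
    congr 1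
    simp only [mulVec, vecMulVec, of_apply, dotProduct]
    rw [Finset.mul_sum]
    exact Finset.sum_congr rfl fun j _ => by ring
  have hdot : w ⬝ᵥ (Xᵀ *ᵥ ((Matrix.diagonal p - Matrix.vecMulVec p p) *ᵥ r))
      = ∑ i, f i * (p i * r i - p i * ∑ j, p j * r j) := by
    rw [dotProduct_mulVec, vecMul_transpose, ← hf_def]
    simp only [dotProduct]
    exact Finset.sum_congr rfl fun i _ => by rw [hu i]
  have hkey : 0 ≤ ∑ i, f i * (p i * r i - p i * ∑ j, p j * r j) := by
    rcases Nat.eq_zero_or_pos K with hK | hK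
    · subst hK; simp
    · have hsum : ∑ i, p i = 1 := by
        have hpos : 0 < ∑ a', Real.exp ((X *ᵥ θ t) a') := by
          have : Nonempty (Fin K) := Fin.pos_iff_nonempty.mp hK
          exact Finset.sum_pos (fun _ _ => Real.exp_pos _) Finset.univ_nonempty
        simp only [hp_def, softmaxPolicy]
        rw [← Finset.sum_div, div_self (ne_of_gt hpos)]
      have hcov := cov_nonneg p f r hp_nonneg hsum hmono
      have heq : ∑ i, f i * (p i * r i - p i * ∑ j, p j * r j)
          = (∑ i, p i * (f i * r i)) - (∑ i, p i * f i) * (∑ i, p i * r i) := by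
        have hterm : ∀ i : Fin K, f i * (p i * r i - p i * ∑ j, p j * r j)
            = p i * (f i * r i) - (p i * f i) * (∑ j, p j * r j) := fun i => by ring
        simp_rw [hterm, Finset.sum_sub_distrib, ← Finset.sum_mul]
      rw [heq]
      linarith
  have h0 : 0 ≤ η * (w ⬝ᵥ (Xᵀ *ᵥ ((Matrix.diagonal p - Matrix.vecMulVec p p) *ᵥ r))) := by
    rw [hdot]; positivity
  linarith
end

section
/- If θ' ∈ ℝ^d is a stationary point of θ ↦ π_θ^T r with π_θ = softmax(Xθ), r is non-constant, and there exists w with Xw preserving the order of r, then a contradiction arises; i.e., the function θ ↦ π_θ^T r has no stationary points. -/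
open Matrix

theorem no_stationary_points {K d : ℕ} (X : Matrix (Fin K) (Fin d) ℝ)
    (r : Fin K → ℝ) (hnonconst : ∃ i j, r i ≠ r j)
    (w : Fin d → ℝ)
    (horder : ∀ i j, r i > r j ↔ (X *ᵥ w) i > (X *ᵥ w) j) :
    ∀ θ' : Fin d → ℝ,
      Xᵀ *ᵥ ((Matrix.diagonal (softmaxPolicy X θ') -
        Matrix.vecMulVec (softmaxPolicy X θ') (softmaxPolicy X θ')) *ᵥ r) ≠ 0 := by
  intro θ' hstat
  obtain ⟨i, j, hij⟩ := hnonconst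
  set π : Fin K → ℝ := softmaxPolicy X θ' with hπ
  set u : Fin K → ℝ := X *ᵥ w with hu
  haveI : Nonempty (Fin K) := ⟨i⟩
  have hsumpos : 0 < ∑ a', Real.exp ((X *ᵥ θ') a') :=
    Finset.sum_pos (fun b _ => Real.exp_pos _) ⟨i, Finset.mem_univ i⟩
  have hpos : ∀ a, 0 < π a := fun a => div_pos (Real.exp_pos _) hsumpos
  have hsum : ∑ a, π a = 1 := by
    simp only [hπ, softmaxPolicy, ← Finset.sum_div]
    exact div_self (ne_of_gt hsumpos)
  have hord : ∀ a b, r a > r b → u a > u b := fun a b h => (horder a b).1 h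
  set R : ℝ := ∑ b, π b * r b with hR
  -- compute the vector
  have hMr : ∀ a, ((Matrix.diagonal π - Matrix.vecMulVec π π) *ᵥ r) a
      = π a * r a - π a * R := by
    intro a
    simp only [Matrix.mulVec, dotProduct, Matrix.sub_apply,
      Matrix.vecMulVec_apply, Matrix.diagonal_apply, sub_mul,
      Finset.sum_sub_distrib]
    simp_rw [ite_mul, zero_mul]
    rw [Finset.sum_ite_eq Finset.univ a (fun b => π a * r b)]
    simp [hR, Finset.mul_sum, mul_assoc]
  -- stationarity gives the key equation
  have h0 : (∑ a, u a * (π a * r a - π a * R)) = 0 := by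
    have h1 : w ⬝ᵥ (Xᵀ *ᵥ ((Matrix.diagonal π - Matrix.vecMulVec π π) *ᵥ r)) = 0 := by
      rw [hstat]; simp
    rw [Matrix.dotProduct_mulVec, Matrix.vecMul_transpose] at h1
    rw [← h1]
    simp only [dotProduct, ← hu]
    exact Finset.sum_congr rfl fun a _ => by rw [hMr a]
  -- rewrite as double sum
  have h1 : (∑ a, u a * (π a * r a - π a * R))
      = ∑ a, ∑ b, π a * π b * (u a * (r a - r b)) := by
    refine Finset.sum_congr rfl fun a _ => ?_
    have e : ∀ b, π a * π b * (u a * (r a - r b))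
        = (u a * (π a * r a)) * π b - (π a * u a) * (π b * r b) := fun b => by ring
    simp_rw [e, Finset.sum_sub_distrib, ← Finset.mul_sum, hsum, ← hR]
    ring
  -- symmetrize
  have h2 : 2 * (∑ a, ∑ b, π a * π b * (u a * (r a - r b)))
      = ∑ a, ∑ b, π a * π b * ((u a - u b) * (r a - r b)) := by
    rw [two_mul]
    nth_rewrite 2 [Finset.sum_comm]
    rw [← Finset.sum_add_distrib]
    refine Finset.sum_congr rfl fun a _ => ?_
    rw [← Finset.sum_add_distrib]
    exact Finset.sum_congr rfl fun b _ => by ring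
  -- nonnegativity of terms
  have hterm : ∀ a b, 0 ≤ π a * π b * ((u a - u b) * (r a - r b)) := by
    intro a b
    refine mul_nonneg (mul_nonneg (hpos a).le (hpos b).le) ?_
    rcases lt_trichotomy (r a) (r b) with h | h | h
    · have := hord b a h
      nlinarith
    · simp [h]
    · have := hord a b h
      exact mul_nonneg (by linarith) (by linarith)
  -- strict positivity at one pair
  have hstrict : ∃ a, 0 < ∑ b, π a * π b * ((u a - u b) * (r a - r b)) := by
    rcases hij.lt_or_gt with h | h
    · refine ⟨j, Finset.sum_pos' (fun b _ => hterm j b) ⟨i, Finset.mem_univ i, ?_⟩⟩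
      have := hord j i h
      exact mul_pos (mul_pos (hpos j) (hpos i)) (mul_pos (by linarith) (by linarith))
    · refine ⟨i, Finset.sum_pos' (fun b _ => hterm i b) ⟨j, Finset.mem_univ j, ?_⟩⟩
      have := hord i j h
      exact mul_pos (mul_pos (hpos i) (hpos j)) (mul_pos (by linarith) (by linarith))
  obtain ⟨a₀, ha₀⟩ := hstrict
  have hpos2 : 0 < ∑ a, ∑ b, π a * π b * ((u a - u b) * (r a - r b)) :=
    Finset.sum_pos' (fun a _ => Finset.sum_nonneg fun b _ => hterm a b)
      ⟨a₀, Finset.mem_univ a₀, ha₀⟩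
  rw [← h2, h1.symm.trans h0, mul_zero] at hpos2
  exact lt_irrefl 0 hpos2
end

section
/- The function θ ↦ π_θ^T r with π_θ = softmax(Xθ) is β-smooth with β = (9/2)·‖r‖_∞·λ_max(X^T X): for all θ, θ' ∈ ℝ^d, |(π_{θ'} - π_θ)^T r - ⟨∇(π_θ^T r), θ' - θ⟩| ≤ (9/4)·‖r‖_∞·λ_max(X^T X)·‖θ' - θ‖²₂. -/
/-!
Along the segment `θ + t • (θ' - θ)` the logits move on the line `z + t • c` with `z = X θ` and
`c = X (θ' - θ)`. The expected reward `g t = softmax (z + t • c) ⬝ᵥ r` has derivative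
`Cov(r, c)`, which at `t = 0` is the gradient term, and second derivative `Cov(r, (c - E c)²)`,
which is at most `2 ‖r‖_∞ Var(c) ≤ 2 ‖r‖_∞ ‖c‖²` in absolute value. Two applications of the mean
value inequality bound `|g 1 - g 0 - g' 0|` by the same quantity, and the Rayleigh bound
`‖X u‖² ≤ λ_max(XᵀX) ‖u‖²` finishes the proof, since `2 ≤ 9/4`.
-/

open Matrix

open Finset Real

section WeightedCov

variable {ι : Type*} [Fintype ι] {p : ι → ℝ}

def weightedCov (p f g : ι → ℝ) : ℝ :=
  p ⬝ᵥ (f * g) - (p ⬝ᵥ f) * (p ⬝ᵥ g)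

lemma dotProduct_mul_sub_sq (p w c : ι → ℝ) (s : ℝ) :
    p ⬝ᵥ (w * fun a => (c a - s) ^ 2)
      = p ⬝ᵥ (w * c * c) - 2 * s * p ⬝ᵥ (w * c) + s ^ 2 * p ⬝ᵥ w := by
  simp only [dotProduct, Pi.mul_apply, mul_sum, ← sum_sub_distrib, ← sum_add_distrib]
  exact sum_congr rfl fun a _ => by ring

lemma weightedCov_sub_mean_sq (hp : ∑ a, p a = 1) (f c : ι → ℝ) :
    weightedCov p f (fun a => (c a - p ⬝ᵥ c) ^ 2)
      = weightedCov p (f * c) c - (weightedCov p f c * (p ⬝ᵥ c) + (p ⬝ᵥ f) * weightedCov p c c) := by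
  have hvar := dotProduct_mul_sub_sq p 1 c (p ⬝ᵥ c)
  rw [one_mul] at hvar
  simp only [weightedCov, dotProduct_mul_sub_sq, hvar, one_mul, dotProduct_one, hp]
  ring

lemma abs_dotProduct_mul_le (hp : 0 ≤ p) {w f : ι → ℝ} (hw : 0 ≤ w) {R : ℝ}
    (hf : ∀ a, |f a| ≤ R) : |p ⬝ᵥ (f * w)| ≤ R * (p ⬝ᵥ w) := by
  rw [dotProduct, dotProduct, mul_sum]
  refine (abs_sum_le_sum_abs _ _).trans (sum_le_sum fun a _ => ?_)
  rw [Pi.mul_apply, abs_mul, abs_mul, abs_of_nonneg (hp a), abs_of_nonneg (hw a)]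
  nlinarith [hf a, mul_nonneg (hp a) (hw a)]

lemma abs_weightedCov_le (hp0 : 0 ≤ p) (hp1 : ∑ a, p a = 1) {f q : ι → ℝ} (hq : 0 ≤ q)
    {R : ℝ} (hf : ∀ a, |f a| ≤ R) : |weightedCov p f q| ≤ 2 * R * (p ⬝ᵥ q) := by
  have hmean : |p ⬝ᵥ f| ≤ R := by
    simpa [dotProduct_one, hp1] using abs_dotProduct_mul_le hp0 zero_le_one hf
  have hpq : 0 ≤ p ⬝ᵥ q := dotProduct_nonneg_of_nonneg hp0 hq
  calc |weightedCov p f q| ≤ |p ⬝ᵥ (f * q)| + |(p ⬝ᵥ f) * (p ⬝ᵥ q)| := abs_sub _ _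
    _ = |p ⬝ᵥ (f * q)| + |p ⬝ᵥ f| * (p ⬝ᵥ q) := by rw [abs_mul, abs_of_nonneg hpq]
    _ ≤ R * (p ⬝ᵥ q) + R * (p ⬝ᵥ q) :=
        add_le_add (abs_dotProduct_mul_le hp0 hq hf) (mul_le_mul_of_nonneg_right hmean hpq)
    _ = 2 * R * (p ⬝ᵥ q) := by ring

lemma variance_le_sum_sq (hp0 : 0 ≤ p) (hp1 : ∑ a, p a = 1) (c : ι → ℝ) :
    (p ⬝ᵥ fun a => (c a - p ⬝ᵥ c) ^ 2) ≤ ∑ a, c a ^ 2 := by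
  have hvar := dotProduct_mul_sub_sq p 1 c (p ⬝ᵥ c)
  simp only [one_mul, dotProduct_one, hp1] at hvar
  have hle : p ⬝ᵥ (c * c) ≤ ∑ a, c a ^ 2 := sum_le_sum fun a _ => by
    have : p a ≤ 1 := hp1 ▸ single_le_sum (fun b _ => hp0 b) (mem_univ a)
    rw [Pi.mul_apply, ← sq]
    nlinarith [sq_nonneg (c a)]
  rw [hvar]
  nlinarith [sq_nonneg (p ⬝ᵥ c)]

lemma diagonal_sub_vecMulVec_mulVec_dotProduct [DecidableEq ι] (p f g : ι → ℝ) :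
    ((diagonal p - vecMulVec p p) *ᵥ f) ⬝ᵥ g = weightedCov p f g := by
  rw [sub_mulVec, sub_dotProduct, vecMulVec_mulVec, op_smul_eq_smul, smul_dotProduct,
    smul_eq_mul, weightedCov]
  simp only [dotProduct, mulVec_diagonal, Pi.mul_apply, mul_assoc]

end WeightedCov

lemma abs_sub_sub_deriv_le_of_abs_deriv2_le {g g' g'' : ℝ → ℝ} {C : ℝ}
    (hg : ∀ t, HasDerivAt g (g' t) t) (hg' : ∀ t, HasDerivAt g' (g'' t) t)
    (hC : ∀ t, |g'' t| ≤ C) : |g 1 - g 0 - g' 0| ≤ C := by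
  have hslope : ∀ t ∈ Set.Icc (0 : ℝ) 1, |g' t - g' 0| ≤ C * (t - 0) :=
    norm_image_sub_le_of_norm_deriv_le_segment' (fun t _ => (hg' t).hasDerivWithinAt)
      fun t _ => hC t
  have hC0 : 0 ≤ C := (abs_nonneg _).trans (hC 0)
  have h := norm_image_sub_le_of_norm_deriv_le_segment_01' (f := fun t => g t - t * g' 0)
    (fun t _ => ((hg t).sub (hasDerivAt_mul_const (g' 0))).hasDerivWithinAt)
    fun t ht => (hslope t (Set.Ico_subset_Icc_self ht)).trans (by nlinarith [ht.2])
  simp only [Real.norm_eq_abs, one_mul, zero_mul, sub_zero] at h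
  rwa [sub_right_comm]

section Softmax

variable {ι : Type*} [Fintype ι]

noncomputable def softmax (z : ι → ℝ) (a : ι) : ℝ :=
  exp (z a) / ∑ a', exp (z a')

lemma softmax_nonneg (z : ι → ℝ) : 0 ≤ softmax z := fun _ =>
  div_nonneg (exp_pos _).le (sum_nonneg fun _ _ => (exp_pos _).le)

lemma sum_exp_pos [Nonempty ι] (z : ι → ℝ) : 0 < ∑ a, exp (z a) :=
  sum_pos (fun _ _ => exp_pos _) univ_nonempty

lemma sum_softmax [Nonempty ι] (z : ι → ℝ) : ∑ a, softmax z a = 1 := by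
  simp only [softmax, ← sum_div, div_self (sum_exp_pos z).ne']

lemma softmax_dotProduct (z f : ι → ℝ) :
    softmax z ⬝ᵥ f = (∑ a, exp (z a) * f a) / ∑ a, exp (z a) := by
  simp only [dotProduct, softmax, div_mul_eq_mul_div, sum_div]

lemma hasDerivAt_sum_exp_add_mul (z c w : ι → ℝ) (t : ℝ) :
    HasDerivAt (fun t => ∑ a, exp (z a + t * c a) * w a)
      (∑ a, exp (z a + t * c a) * (c a * w a)) t :=
  HasDerivAt.fun_sum fun a _ =>
    ((((hasDerivAt_mul_const (c a)).const_add (z a)).exp).mul_const (w a)).congr_deriv (by ring)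

lemma hasDerivAt_softmax_dotProduct [Nonempty ι] (z c f : ι → ℝ) (t : ℝ) :
    HasDerivAt (fun t => softmax (z + t • c) ⬝ᵥ f)
      (weightedCov (softmax (z + t • c)) f c) t := by
  have hS := sum_exp_pos (z + t • c)
  simp only [Pi.add_apply, Pi.smul_apply, smul_eq_mul] at hS
  simp only [weightedCov, softmax_dotProduct, Pi.add_apply, Pi.smul_apply, smul_eq_mul,
    Pi.mul_apply]
  refine ((hasDerivAt_sum_exp_add_mul z c f t).div
    (by simpa using hasDerivAt_sum_exp_add_mul z c 1 t) hS.ne').congr_deriv ?_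
  field_simp

lemma hasDerivAt_weightedCov_softmax [Nonempty ι] (z c f : ι → ℝ) (t : ℝ) :
    HasDerivAt (fun t => weightedCov (softmax (z + t • c)) f c)
      (weightedCov (softmax (z + t • c)) (f * c) c
        - (weightedCov (softmax (z + t • c)) f c * (softmax (z + t • c) ⬝ᵥ c)
          + (softmax (z + t • c) ⬝ᵥ f) * weightedCov (softmax (z + t • c)) c c)) t :=
  (hasDerivAt_softmax_dotProduct z c (f * c) t).sub
    ((hasDerivAt_softmax_dotProduct z c f t).mul (hasDerivAt_softmax_dotProduct z c c t))

lemma abs_softmax_add_dotProduct_sub_le [Nonempty ι] (z c f : ι → ℝ) {R : ℝ}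
    (hf : ∀ a, |f a| ≤ R) :
    |softmax (z + c) ⬝ᵥ f - softmax z ⬝ᵥ f - weightedCov (softmax z) f c|
      ≤ 2 * R * ∑ a, c a ^ 2 := by
  have hR : 0 ≤ R := (abs_nonneg _).trans (hf (Classical.arbitrary ι))
  have h := abs_sub_sub_deriv_le_of_abs_deriv2_le (hasDerivAt_softmax_dotProduct z c f)
    (hasDerivAt_weightedCov_softmax z c f) fun t => by
      have hp0 := softmax_nonneg (z + t • c)
      rw [← weightedCov_sub_mean_sq (sum_softmax _)]
      exact (abs_weightedCov_le hp0 (sum_softmax _) (fun a => sq_nonneg _) hf).trans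
        (mul_le_mul_of_nonneg_left (variance_le_sum_sq hp0 (sum_softmax _) c) (by positivity))
  simpa using h

end Softmax

lemma Matrix.IsHermitian.dotProduct_mulVec_le {n : Type*} [Fintype n] [DecidableEq n]
    {A : Matrix n n ℝ} (hA : A.IsHermitian) (u : n → ℝ) :
    u ⬝ᵥ (A *ᵥ u) ≤ (⨆ i, hA.eigenvalues i) * ∑ i, u i ^ 2 := by
  set U : Matrix n n ℝ := (hA.eigenvectorUnitary : Matrix n n ℝ)
  set y : n → ℝ := Uᵀ *ᵥ u
  have hstar : star U = Uᵀ := conjTranspose_eq_transpose_of_trivial U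
  have hUU : U * Uᵀ = 1 := hstar ▸ Matrix.mem_unitaryGroup_iff.mp hA.eigenvectorUnitary.2
  have hquad : u ⬝ᵥ (A *ᵥ u) = ∑ i, hA.eigenvalues i * y i ^ 2 := by
    conv_lhs => rw [hA.spectral_theorem, Unitary.conjStarAlgAut_apply]
    change u ⬝ᵥ (U * _ * star U) *ᵥ u = _
    rw [hstar, ← mulVec_mulVec, ← mulVec_mulVec, dotProduct_mulVec, ← mulVec_transpose]
    simp only [dotProduct, mulVec_diagonal]
    exact sum_congr rfl fun i _ => by
      simp only [RCLike.ofReal_real_eq_id, Function.comp_apply, id_eq, y]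
      ring
  have hnorm : ∑ i, y i ^ 2 = ∑ i, u i ^ 2 := by
    have : y ⬝ᵥ y = u ⬝ᵥ u := by
      rw [dotProduct_mulVec, vecMul_transpose, mulVec_mulVec, hUU, one_mulVec]
    simpa [dotProduct, sq] using this
  rw [hquad, ← hnorm, mul_sum]
  exact sum_le_sum fun i _ => mul_le_mul_of_nonneg_right
    (le_ciSup (Set.finite_range _).bddAbove i) (sq_nonneg _)

theorem smoothness_expected_reward {K d : ℕ} (X : Matrix (Fin K) (Fin d) ℝ)
    (r : Fin K → ℝ) (hX : (Xᵀ * X).IsHermitian) :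
    ∀ θ θ' : Fin d → ℝ,
      |(∑ a, (softmaxPolicy X θ' a - softmaxPolicy X θ a) * r a) -
          (Xᵀ *ᵥ ((Matrix.diagonal (softmaxPolicy X θ) -
            Matrix.vecMulVec (softmaxPolicy X θ) (softmaxPolicy X θ)) *ᵥ r)) ⬝ᵥ (θ' - θ)| ≤
        9 / 4 * (⨆ a, |r a|) * (⨆ i, hX.eigenvalues i) * ∑ i, (θ' i - θ i) ^ 2 := by
  intro θ θ'
  rcases isEmpty_or_nonempty (Fin K) with hK | hK
  · simp [mulVec, dotProduct]
  set u := θ' - θ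
  have hR0 : 0 ≤ ⨆ a, |r a| := Real.iSup_nonneg fun a => abs_nonneg _
  have hquad : ∑ a, (X *ᵥ u) a ^ 2 ≤ (⨆ i, hX.eigenvalues i) * ∑ i, u i ^ 2 := by
    have h := hX.dotProduct_mulVec_le u
    rw [← mulVec_mulVec, dotProduct_mulVec, vecMul_transpose] at h
    simpa only [dotProduct, sq] using h
  have hθ' : X *ᵥ θ' = X *ᵥ θ + X *ᵥ u := by rw [← mulVec_add, add_sub_cancel]
  have htaylor := abs_softmax_add_dotProduct_sub_le (X *ᵥ θ) (X *ᵥ u) r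
    fun a => le_ciSup (Set.finite_range fun a => |r a|).bddAbove a
  rw [← hθ', ← diagonal_sub_vecMulVec_mulVec_dotProduct, dotProduct_mulVec,
    ← mulVec_transpose] at htaylor
  have hlhs : ∑ a, (softmaxPolicy X θ' a - softmaxPolicy X θ a) * r a
      = softmax (X *ᵥ θ') ⬝ᵥ r - softmax (X *ᵥ θ) ⬝ᵥ r := sub_dotProduct _ _ _
  rw [hlhs]
  refine htaylor.trans ?_
  change _ ≤ _ * ∑ i, u i ^ 2
  have hS : 0 ≤ ∑ a, (X *ᵥ u) a ^ 2 := sum_nonneg fun a _ => sq_nonneg _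
  nlinarith [mul_le_mul_of_nonneg_left hquad hR0, mul_nonneg hR0 (hS.trans hquad)]
end
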